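/- Transfer principle: Let A be a symmetric p×p real matrix with nonnegative diagonal entries. Let d ∈ {2, …, p} and suppose that for every subset J ⊆ {1,…,p} with |J| = d and every u ∈ ℝ^p one has u_J^T A u_J ≥ 0, where u_J is u with coordinates outside J set to zero. Then for all u ∈ ℝ^p, u^T A u ≥ − (max_j A_{jj}) · ‖u‖₁² / (d−1). -/

import Mathlib

/-!
Normalise `u = ‖u‖₁ • (π * s)` with `π = |u| / ‖u‖₁` a probability vector and `s` the sign pattern of
`u`. Draw `d` indices independently from `π` and put `‖u‖₁ s_a` times the multiplicity of `a` at each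
coordinate `a`. This random vector has at most `d` nonzero entries, so its quadratic form is
nonnegative, while the multinomial second moments give its mean as
`d (d - 1) uᵀ A u + d ‖u‖₁ ∑ₐ |u_a| A_aa`. Hence `(d - 1) uᵀ A u ≥ -‖u‖₁ ∑ₐ |u_a| A_aa`, and the last
sum is at most `(max_a A_aa) ‖u‖₁`.
-/

open Matrix BigOperators Finset

section Sampling

/- A sum `∑ k : Fin n → ι, (∏ r, π (k r)) * F k` is the expectation of `F` over `n` independent
draws from the distribution `π`. -/

variable {R ι : Type*} [CommRing R] {n : ℕ}

def empiricalVec [DecidableEq ι] (x : ι → R) (k : Fin n → ι) : ι → R := fun a => x a * #{t | k t = a}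

theorem empiricalVec_eq_zero_of_notMem_image [DecidableEq ι] (x : ι → R) (k : Fin n → ι) {a : ι}
    (ha : a ∉ univ.image k) : empiricalVec x k a = 0 := by
  have hcount : #{t | k t = a} = 0 :=
    card_eq_zero.2 <| filter_eq_empty_iff.2 fun t _ hta => ha (mem_image.2 ⟨t, mem_univ t, hta⟩)
  simp [empiricalVec, hcount]

variable [Fintype ι]

theorem sum_prod_mul_prod (π : ι → R) (f : Fin n → ι → R) :
    ∑ k : Fin n → ι, (∏ r, π (k r)) * ∏ r, f r (k r) = ∏ r, ∑ a, π a * f r a := by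
  rw [Fintype.prod_sum]
  simp only [prod_mul_distrib]

variable [DecidableEq ι]

theorem sum_prod_mul_ite_mul_ite (π : ι → R) (hπ : ∑ a, π a = 1) (t t' : Fin n) (a b : ι) :
    ∑ k : Fin n → ι, (∏ r, π (k r)) *
        ((if k t = a then 1 else 0) * (if k t' = b then 1 else 0)) =
      if t = t' then (if a = b then π a else 0) else π a * π b := by
  let f : Fin n → ι → R := fun r c =>
    (if r = t then (if c = a then 1 else 0) else 1) * (if r = t' then (if c = b then 1 else 0) else 1)
  have hf : ∀ k : Fin n → ι,
      (if k t = a then (1 : R) else 0) * (if k t' = b then 1 else 0) = ∏ r, f r (k r) := by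
    intro k
    rw [prod_mul_distrib, Fintype.prod_ite_eq', Fintype.prod_ite_eq']
  simp only [hf]
  rw [sum_prod_mul_prod]
  rcases eq_or_ne t t' with rfl | htt'
  · rw [if_pos rfl, Fintype.prod_eq_single t fun r hr => by simp [f, hr, hπ]]
    simp only [f, if_true, mul_ite, mul_zero, mul_one, sum_ite_eq', mem_univ]
    rcases eq_or_ne a b with rfl | hab
    · simp
    · simp [hab, hab.symm]
  · rw [if_neg htt', Fintype.prod_eq_mul t t' htt' fun r hr => by simp [f, hr.1, hr.2, hπ]]
    simp [f, htt', htt'.symm]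

theorem sum_prod_mul_card_mul_card (π : ι → R) (hπ : ∑ a, π a = 1) (a b : ι) :
    ∑ k : Fin n → ι, (∏ r, π (k r)) * ((#{t | k t = a} : R) * #{t | k t = b}) =
      n * (n - 1) * (π a * π b) + n * (if a = b then π a else 0) := by
  have hsplit : ∀ t t' : Fin n, (if t = t' then (if a = b then π a else 0) else π a * π b) =
      π a * π b + if t = t' then (if a = b then π a else 0) - π a * π b else 0 := by
    intro t t'
    split_ifs <;> ring
  calc ∑ k : Fin n → ι, (∏ r, π (k r)) * ((#{t | k t = a} : R) * #{t | k t = b})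
      = ∑ t, ∑ t', ∑ k : Fin n → ι, (∏ r, π (k r)) *
          ((if k t = a then 1 else 0) * (if k t' = b then 1 else 0)) := by
        simp only [natCast_card_filter, sum_mul_sum]
        simp only [mul_sum]
        rw [← sum_comm_cycle]
    _ = ∑ t : Fin n, ∑ t' : Fin n,
          (if t = t' then (if a = b then π a else 0) else π a * π b) := by
        simp only [sum_prod_mul_ite_mul_ite π hπ]
    _ = n * (n - 1) * (π a * π b) + n * (if a = b then π a else 0) := by
        simp only [hsplit, sum_add_distrib, sum_ite_eq, mem_univ, if_true, sum_const, card_univ,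
          Fintype.card_fin, nsmul_eq_mul]
        ring

theorem sum_prod_mul_quadForm_empiricalVec (π x : ι → R) (hπ : ∑ a, π a = 1)
    (A : Matrix ι ι R) :
    ∑ k : Fin n → ι, (∏ r, π (k r)) * (empiricalVec x k ⬝ᵥ A *ᵥ empiricalVec x k) =
      n * (n - 1) * ((π * x) ⬝ᵥ A *ᵥ (π * x)) + n * ∑ a, π a * x a ^ 2 * A a a := by
  have hQ : ∀ w : ι → R, w ⬝ᵥ A *ᵥ w = ∑ a, ∑ b, w a * A a b * w b := by
    intro w
    simp only [dotProduct, mulVec, mul_sum, mul_assoc]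
  calc ∑ k : Fin n → ι, (∏ r, π (k r)) * (empiricalVec x k ⬝ᵥ A *ᵥ empiricalVec x k)
      = ∑ a, ∑ b, x a * A a b * x b *
          ∑ k : Fin n → ι, (∏ r, π (k r)) * ((#{t | k t = a} : R) * #{t | k t = b}) := by
        simp only [hQ, empiricalVec, mul_sum]
        rw [← sum_comm_cycle]
        refine Finset.sum_congr rfl fun a _ => Finset.sum_congr rfl fun b _ =>
          Finset.sum_congr rfl fun k _ => by ring
    _ = ∑ a, ∑ b, x a * A a b * x b *
          (n * (n - 1) * (π a * π b) + n * (if a = b then π a else 0)) := by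
        simp only [sum_prod_mul_card_mul_card π hπ]
    _ = n * (n - 1) * ((π * x) ⬝ᵥ A *ᵥ (π * x)) + n * ∑ a, π a * x a ^ 2 * A a a := by
        simp only [hQ, mul_add, sum_add_distrib, mul_ite, mul_zero, sum_ite_eq, mem_univ, if_true,
          mul_sum, Pi.mul_apply]
        congr 1
        · exact Finset.sum_congr rfl fun a _ => Finset.sum_congr rfl fun b _ => by ring
        · exact Finset.sum_congr rfl fun a _ => by ring

end Sampling

section Sparse

variable {ι : Type*} [Fintype ι] [DecidableEq ι] (A : Matrix ι ι ℝ) {d : ℕ}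

theorem quadForm_nonneg_of_forall_notMem_eq_zero (hdι : d ≤ Fintype.card ι)
    (hpos : ∀ J : Finset ι, #J = d → ∀ u : ι → ℝ,
      0 ≤ (fun i => if i ∈ J then u i else 0) ⬝ᵥ A *ᵥ (fun i => if i ∈ J then u i else 0))
    {S : Finset ι} (hS : #S ≤ d) {w : ι → ℝ} (hw : ∀ a ∉ S, w a = 0) :
    0 ≤ w ⬝ᵥ A *ᵥ w := by
  obtain ⟨J, hSJ, -, hJ⟩ := exists_subsuperset_card_eq (subset_univ S) hS (by simpa using hdι)
  have hwJ : (fun i => if i ∈ J then w i else 0) = w := by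
    funext i
    split_ifs with hi
    · rfl
    · exact (hw i fun hiS => hi (hSJ hiS)).symm
  simpa [hwJ] using hpos J hJ w

theorem sub_one_mul_quadForm_add_nonneg (hd : 0 < d)
    (hsparse : ∀ S : Finset ι, #S ≤ d → ∀ w : ι → ℝ, (∀ a ∉ S, w a = 0) → 0 ≤ w ⬝ᵥ A *ᵥ w)
    (u : ι → ℝ) :
    0 ≤ (d - 1) * (u ⬝ᵥ A *ᵥ u) + (∑ j, |u j|) * ∑ j, |u j| * A j j := by
  set T := ∑ j, |u j|
  rcases (sum_nonneg fun j _ => abs_nonneg (u j) : 0 ≤ T).eq_or_lt with hT_eq | hT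
  · have hu : u = 0 := funext fun j => abs_eq_zero.1 <|
      (sum_eq_zero_iff_of_nonneg fun j _ => abs_nonneg (u j)).1 hT_eq.symm j (mem_univ j)
    simp [hu]
  set π : ι → ℝ := fun j => |u j| / T
  set x : ι → ℝ := fun j => T * SignType.sign (u j)
  have hT0 : T ≠ 0 := hT.ne'
  have hπ : ∑ j, π j = 1 := by rw [← sum_div, div_self hT0]
  have hπx : π * x = u := by
    funext j
    simp only [Pi.mul_apply, π, x]
    calc |u j| / T * (T * SignType.sign (u j)) = |u j| * SignType.sign (u j) := by field_simp
      _ = u j := abs_mul_sign (u j)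
  have hπx2 : ∀ j, π j * x j ^ 2 * A j j = T * (|u j| * A j j) := by
    intro j
    simp only [π, x]
    calc |u j| / T * (T * SignType.sign (u j)) ^ 2 * A j j
        = T * (|u j| * SignType.sign (u j) * SignType.sign (u j) * A j j) := by field_simp
      _ = T * (|u j| * A j j) := by rw [abs_mul_sign, self_mul_sign]
  have hmean := sum_prod_mul_quadForm_empiricalVec (n := d) π x hπ A
  rw [hπx] at hmean
  simp only [hπx2, ← mul_sum] at hmean
  have hmean_nonneg : 0 ≤ ∑ k : Fin d → ι, (∏ r, π (k r)) *
      (empiricalVec x k ⬝ᵥ A *ᵥ empiricalVec x k) := by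
    refine sum_nonneg fun k _ => mul_nonneg (prod_nonneg fun r _ => ?_) ?_
    · exact div_nonneg (abs_nonneg _) hT.le
    · exact hsparse _ (card_image_le.trans (by simp)) _
        fun a ha => empiricalVec_eq_zero_of_notMem_image x k ha
  have hdpos : (0 : ℝ) < d := by exact_mod_cast hd
  exact (mul_nonneg_iff_of_pos_left hdpos).1 (by linarith)

end Sparse

theorem transfer_principle_general
    {p : ℕ} (A : Matrix (Fin p) (Fin p) ℝ)
    (d : ℕ) (hd : 2 ≤ d) (hdp : d ≤ p)
    (hpos : ∀ J : Finset (Fin p), J.card = d → ∀ u : Fin p → ℝ,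
      0 ≤ (fun i => if i ∈ J then u i else 0) ⬝ᵥ
            A *ᵥ (fun i => if i ∈ J then u i else 0)) :
    ∀ u : Fin p → ℝ,
      u ⬝ᵥ A *ᵥ u ≥ -((⨆ j, A j j) * (∑ j, |u j|) ^ 2 / ((d : ℝ) - 1)) := by
  intro u
  have hmain := sub_one_mul_quadForm_add_nonneg A (by omega)
    (fun _ hS _ hw => quadForm_nonneg_of_forall_notMem_eq_zero A (by simpa using hdp) hpos hS hw) u
  have hdiag : ∑ j, |u j| * A j j ≤ (⨆ j, A j j) * ∑ j, |u j| := by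
    rw [mul_comm, sum_mul]
    refine sum_le_sum fun j _ => ?_
    exact mul_le_mul_of_nonneg_left (le_ciSup (Set.finite_range fun j => A j j).bddAbove j)
      (abs_nonneg (u j))
  have hd1 : (0 : ℝ) < d - 1 := by
    have : (2 : ℝ) ≤ d := by exact_mod_cast hd
    linarith
  have hT : 0 ≤ ∑ j, |u j| := sum_nonneg fun j _ => abs_nonneg (u j)
  rw [ge_iff_le, neg_le, le_div_iff₀ hd1]
  nlinarith [mul_le_mul_of_nonneg_left hdiag hT]

theorem transfer_principle
    {p : ℕ} (A : Matrix (Fin p) (Fin p) ℝ) (hA : A.IsSymm)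
    (hdiag : ∀ j, 0 ≤ A j j)
    (d : ℕ) (hd : 2 ≤ d) (hdp : d ≤ p)
    (hpos : ∀ J : Finset (Fin p), J.card = d → ∀ u : Fin p → ℝ,
      0 ≤ (fun i => if i ∈ J then u i else 0) ⬝ᵥ
            A *ᵥ (fun i => if i ∈ J then u i else 0)) :
    ∀ u : Fin p → ℝ,
      u ⬝ᵥ A *ᵥ u ≥ -((⨆ j, A j j) * (∑ j, |u j|) ^ 2 / ((d : ℝ) - 1)) :=
  transfer_principle_general A d hd hdp hpos
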